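/- Let $m$ be a positive integer and $k$ a positive odd integer. With $M = \Gamma_{m,k} \oplus \mathbb{Z}\beta$ ($\langle \beta,\beta\rangle = -k$) and $\alpha_i = \gamma_i + \beta$, $\beta' = (km+2)\beta + k(\gamma_1+\cdots+\gamma_m)$, the sublattice $N = \mathbb{Z}\alpha_1 + \cdots + \mathbb{Z}\alpha_m + \mathbb{Z}\beta'$ has index $2$ in $M$, that is, $M/N \cong \mathbb{Z}/2\mathbb{Z}$. -/
import Mathlib


/-- `α_i = γ_i + β` in `M = ℤγ₁ + ⋯ + ℤγ_m + ℤβ ≅ (Fin m → ℤ) × ℤ`. -/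
def alphaVec (m : ℕ) (i : Fin m) : (Fin m → ℤ) × ℤ := (Pi.single i 1, 1)

/-- `β' = (km+2)β + k(γ₁ + ⋯ + γ_m)`. -/
def betaPrime (m k : ℕ) : (Fin m → ℤ) × ℤ :=
  (fun _ => (k : ℤ), (k : ℤ) * m + 2)

/-- The map `(v, b) ↦ b - ∑ vᵢ  (mod 2)`. -/
def phiMap (m : ℕ) : ((Fin m → ℤ) × ℤ) →ₗ[ℤ] ZMod 2 where
  toFun p := ((p.2 - ∑ i, p.1 i : ℤ) : ZMod 2)
  map_add' p q := by
    simp only [Prod.fst_add, Prod.snd_add, Pi.add_apply]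
    push_cast [Finset.sum_add_distrib]
    ring
  map_smul' z p := by
    simp only [Prod.smul_fst, Prod.smul_snd, Pi.smul_apply, smul_eq_mul, RingHom.id_apply]
    push_cast
    rw [zsmul_eq_mul, mul_sub, Finset.mul_sum]

/-- For `k` odd, the sublattice `N = ℤα₁ + ⋯ + ℤα_m + ℤβ'` has index `2`
in `M`, i.e. `M/N ≅ ℤ/2ℤ`. -/
theorem index_two (m k : ℕ) (hm : 0 < m) (hk : 0 < k) (hodd : Odd k) :
    Nat.card
      (((Fin m → ℤ) × ℤ) ⧸
        Submodule.span ℤ (Set.range (alphaVec m) ∪ {betaPrime m k})) = 2 := by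
  have hker : Submodule.span ℤ (Set.range (alphaVec m) ∪ {betaPrime m k})
      = LinearMap.ker (phiMap m) := by
    apply le_antisymm
    · rw [Submodule.span_le]
      rintro x (⟨i, rfl⟩ | rfl)
      · simp [phiMap, alphaVec, LinearMap.mem_ker, Pi.single_apply]
      · simp only [LinearMap.mem_ker, phiMap, LinearMap.coe_mk, AddHom.coe_mk, betaPrime,
          SetLike.mem_coe]
        simp [Finset.sum_const, mul_comm]
        decide
    · intro p hp
      simp only [LinearMap.mem_ker, phiMap, LinearMap.coe_mk, AddHom.coe_mk] at hp
      obtain ⟨c, hc⟩ : (2 : ℤ) ∣ (p.2 - ∑ i, p.1 i) := by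
        have := (ZMod.intCast_zmod_eq_zero_iff_dvd (p.2 - ∑ i, p.1 i) 2).mp hp
        exact_mod_cast this
      have hrep : p = (∑ i, (p.1 i - c * k) • alphaVec m i) + c • betaPrime m k := by
        have h1 : p.1 = (∑ i, ((p.1 i - c * k) • alphaVec m i)).1
            + (c • betaPrime m k).1 := by
          funext j
          simp only [Prod.fst_sum, Finset.sum_apply, alphaVec, betaPrime, Prod.smul_fst,
            smul_eq_mul, Pi.smul_apply, Pi.add_apply, Finset.sum_apply]
          rw [Finset.sum_eq_single j]
          · simp
          · intro i _ hij
            simp [Pi.single_apply, Ne.symm hij]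
          · simp
        have h2 : p.2 = (∑ i, ((p.1 i - c * k) • alphaVec m i)).2
            + (c • betaPrime m k).2 := by
          simp only [Prod.snd_sum, alphaVec, betaPrime, Prod.smul_snd, smul_eq_mul]
          simp only [mul_one, Finset.sum_sub_distrib, Finset.sum_const, Finset.card_univ,
            Fintype.card_fin, nsmul_eq_mul]
          linarith [hc]
        exact Prod.ext h1 h2
      rw [hrep]
      refine add_mem (Submodule.sum_mem _ fun i _ => Submodule.smul_mem _ _
        (Submodule.subset_span (Or.inl ⟨i, rfl⟩)))
        (Submodule.smul_mem _ _ (Submodule.subset_span (Or.inr rfl)))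
  have hsurj : Function.Surjective (phiMap m) := by
    intro z
    refine ⟨(0, (z.val : ℤ)), ?_⟩
    simp [phiMap, ZMod.natCast_val, ZMod.cast_id]
  rw [hker, Nat.card_congr ((phiMap m).quotKerEquivOfSurjective hsurj).toEquiv]
  simp [Nat.card_eq_fintype_card]
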